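/- Expected geometric hypervolume guarantee (Proposition 4.1, weak form). Let B ≥ 2, let e₁, …, e_B ∈ ℝᵈ be points on the unit sphere (‖eᵢ‖ = 1), and let t, u ∈ ℝᵈ be orthonormal vectors. For δ = ((a₁, …, a_B), (b₁, …, b_B)) ∈ ℝ^B × ℝ^B define perturbed points ẽᵢ(δ) = eᵢ + aᵢ t + bᵢ u, edge vectors vᵢ(δ) = ẽᵢ(δ) − ẽ₁(δ) for i = 2, …, B, the Gram matrix G̃(δ) with entries G̃(δ)ᵢⱼ = ⟨vᵢ(δ), vⱼ(δ)⟩, and the hypervolume V(δ) = √(det G̃(δ)) / (B−1)!. Let δ be distributed as the product of i.i.d. uniform distributions on [−r₁, r₁] for the aᵢ and on [−r₂, r₂] for the bᵢ, all independent. Then E[ V(δ) ] ≥ V(0): the expected hypervolume of the perturbed point set is at least the hypervolume of the original point set. -/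

import Mathlib

open MeasureTheory

/-- The uniform probability distribution on `[-r, r]`; for `r = 0` this is the Dirac mass
at `0`. -/
noncomputable def unifIcc (r : ℝ) : Measure ℝ :=
  if r = 0 then Measure.dirac 0
  else ((2 * r).toNNReal)⁻¹ • volume.restrict (Set.Icc (-r) r)

instance (r : ℝ) : SigmaFinite (unifIcc r) := by
  unfold unifIcc; split <;> infer_instance

/-- Product measure: `B` i.i.d. uniform shifts `aᵢ` on `[-r₁, r₁]` and `B` i.i.d. uniform
shifts `bᵢ` on `[-r₂, r₂]`, all `2B` coordinates independent. -/
noncomputable def gassMeasure (B : ℕ) (r₁ r₂ : ℝ) :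
    Measure ((Fin B → ℝ) × (Fin B → ℝ)) :=
  (Measure.pi fun _ => unifIcc r₁).prod (Measure.pi fun _ => unifIcc r₂)

/-- Perturbed points `ẽᵢ(δ) = eᵢ + aᵢ • t + bᵢ • u` where `δ = (a, b)`. -/
noncomputable def gassPert {d B : ℕ} (e : Fin B → EuclideanSpace ℝ (Fin d))
    (t u : EuclideanSpace ℝ (Fin d)) (δ : (Fin B → ℝ) × (Fin B → ℝ)) (i : Fin B) :
    EuclideanSpace ℝ (Fin d) :=
  e i + δ.1 i • t + δ.2 i • u

/-- Edge vectors `vᵢ(δ) = ẽᵢ₊₁(δ) - ẽ₁(δ)`, for `i = 2, …, B` (indexed by `Fin (B - 1)`). -/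
noncomputable def gassEdge {d B : ℕ} (e : Fin B → EuclideanSpace ℝ (Fin d))
    (t u : EuclideanSpace ℝ (Fin d)) (δ : (Fin B → ℝ) × (Fin B → ℝ))
    (j : Fin (B - 1)) : EuclideanSpace ℝ (Fin d) :=
  gassPert e t u δ ⟨j.1 + 1, by have := j.2; omega⟩ -
    gassPert e t u δ ⟨0, by have := j.2; omega⟩

/-- The `(B-1) × (B-1)` Gram matrix of the edge vectors, `G̃(δ)ᵢⱼ = ⟨vᵢ(δ), vⱼ(δ)⟩`. -/
noncomputable def gassGram {d B : ℕ} (e : Fin B → EuclideanSpace ℝ (Fin d))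
    (t u : EuclideanSpace ℝ (Fin d)) (δ : (Fin B → ℝ) × (Fin B → ℝ)) :
    Matrix (Fin (B - 1)) (Fin (B - 1)) ℝ :=
  Matrix.of fun i j => inner ℝ (gassEdge e t u δ i) (gassEdge e t u δ j)

/-- The `(B-1)`-dimensional hypervolume of the simplex spanned by the (perturbed) batch:
`V(δ) = √(det G̃(δ)) / (B-1)!`. -/
noncomputable def gassVolume {d B : ℕ} (e : Fin B → EuclideanSpace ℝ (Fin d))
    (t u : EuclideanSpace ℝ (Fin d)) (δ : (Fin B → ℝ) × (Fin B → ℝ)) : ℝ :=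
  Real.sqrt (gassGram e t u δ).det / (Nat.factorial (B - 1) : ℝ)

/-! By the Cauchy–Binet formula (summed over all row selections `g`, which counts every set of
`k` rows `k!` times), `√(det (Aᵀ A))` for a matrix `A` with `k` columns is a constant multiple
of the Euclidean norm of the vector of maximal minors of `A`. For the edge matrix every minor has
the form `det (N + x αᵀ + y βᵀ)` with `α = (aⱼ₊₁ - a₀)ⱼ` and `β = (bⱼ₊₁ - b₀)ⱼ`. By the matrix determinant
lemma this is affine in `α` for fixed `β` and vice versa; as `α` and `β` are independent and
centred, the expected minor vector is the minor vector at `δ = 0`. Jensen's inequality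
`‖E T‖ ≤ E ‖T‖` for the norm concludes. -/

open Matrix

namespace Matrix

variable {m n R : Type*} [Fintype n] [DecidableEq n] [CommRing R]

theorem det_add_vecMulVec (N : Matrix n n R) (x s : n → R) :
    det (N + vecMulVec x s) = det N + ∑ i, x i * det (N.updateRow i s) := by
  classical
  suffices h : ∀ (S : Finset n) (N : Matrix n n R),
      det (N + vecMulVec (fun i => if i ∈ S then x i else 0) s) =
        det N + ∑ i ∈ S, x i * det (N.updateRow i s) by
    simpa using h Finset.univ N
  intro S
  induction S using Finset.induction_on with
  | empty =>
    intro N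
    simp only [Finset.notMem_empty, if_false, Finset.sum_empty, add_zero]
    rw [show (fun _ : n => (0 : R)) = 0 from rfl, zero_vecMulVec, add_zero]
  | insert i₀ S hi₀ ih =>
    intro N
    set xS : n → R := fun i => if i ∈ S then x i else 0
    have hxS : xS i₀ = 0 := if_neg hi₀
    have hinsert : N + vecMulVec (fun i => if i ∈ insert i₀ S then x i else 0) s =
        (N + vecMulVec xS s).updateRow i₀ (N i₀ + x i₀ • s) := by
      ext i j
      by_cases h : i = i₀
      · subst h; simp [xS, vecMulVec_apply, hi₀]
      · simp [xS, vecMulVec_apply, h]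
    have hrow₀ : (N + vecMulVec xS s).updateRow i₀ (N i₀) = N + vecMulVec xS s := by
      have h : (N + vecMulVec xS s) i₀ = N i₀ := by ext j; simp [vecMulVec_apply, hxS]
      rw [← h, updateRow_eq_self]
    have hrow_s : (N + vecMulVec xS s).updateRow i₀ s = N.updateRow i₀ s + vecMulVec xS s := by
      ext i j
      by_cases h : i = i₀
      · subst h; simp [vecMulVec_apply, hxS]
      · simp [h]
    have hzero : ∑ i ∈ S, x i * det ((N.updateRow i₀ s).updateRow i s) = 0 := by
      refine Finset.sum_eq_zero fun i hi => ?_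
      have hne : i ≠ i₀ := fun h => hi₀ (h ▸ hi)
      rw [det_zero_of_row_eq hne (by simp [updateRow_ne hne.symm]), mul_zero]
    rw [hinsert, det_updateRow_add, det_updateRow_smul, hrow₀, hrow_s, ih N,
      ih (N.updateRow i₀ s), hzero, Finset.sum_insert hi₀]
    ring

variable [Fintype m]

theorem det_transpose_mul_self_eq_sum (A : Matrix m n R) :
    det (Aᵀ * A) = ∑ g : n → m, (∏ i, A (g i) i) * det (A.submatrix g id) := by
  have hrows : Aᵀ * A = fun i => ∑ r, A r i • A r := by
    ext i j; simp [mul_apply, Finset.sum_apply]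
  rw [hrows]
  change (detRowAlternating : (n → R) [⋀^n]→ₗ[R] R) (fun i => ∑ r, A r i • A r) = _
  rw [← AlternatingMap.coe_multilinearMap, MultilinearMap.map_sum]
  simp only [MultilinearMap.map_smul_univ, smul_eq_mul]
  rfl

theorem sum_det_submatrix_sq (A : Matrix m n R) :
    ∑ g : n → m, det (A.submatrix g id) ^ 2 = (Fintype.card n).factorial * det (Aᵀ * A) := by
  have hperm : ∀ σ : Equiv.Perm n,
      ∑ g : n → m, (Equiv.Perm.sign σ • ∏ i, A (g (σ i)) i) * det (A.submatrix g id) =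
        det (Aᵀ * A) := by
    intro σ
    -- substitute `g = h ∘ σ⁻¹`: then `det (A.submatrix g id) = sign σ * det (A.submatrix h id)`
    rw [det_transpose_mul_self_eq_sum, ← (σ.arrowCongr (Equiv.refl m)).sum_comp]
    refine Finset.sum_congr rfl fun h _ => ?_
    have hsub : A.submatrix (σ.arrowCongr (Equiv.refl m) h) id =
        (A.submatrix h id).submatrix σ.symm id := rfl
    simp only [hsub, det_permute, Equiv.arrowCongr_apply, Function.comp_apply,
      Equiv.symm_apply_apply, Equiv.refl_apply, Equiv.Perm.sign_symm, Units.smul_def,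
      zsmul_eq_mul]
    have hsign : ((Equiv.Perm.sign σ : ℤ) : R) * (Equiv.Perm.sign σ : ℤ) = 1 := by
      rw [← Int.cast_mul, ← Units.val_mul, Int.units_mul_self, Units.val_one, Int.cast_one]
    linear_combination ((∏ i, A (h i) i) * det (A.submatrix h id)) * hsign
  calc ∑ g : n → m, det (A.submatrix g id) ^ 2
      = ∑ g : n → m, ∑ σ : Equiv.Perm n,
          (Equiv.Perm.sign σ • ∏ i, A (g (σ i)) i) * det (A.submatrix g id) := by
        simp only [sq, det_apply, Finset.sum_mul, submatrix_apply, id]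
    _ = ∑ σ : Equiv.Perm n, det (Aᵀ * A) := by rw [Finset.sum_comm]; simp only [hperm]
    _ = (Fintype.card n).factorial * det (Aᵀ * A) := by
        rw [Finset.sum_const, Finset.card_univ, Fintype.card_perm, nsmul_eq_mul]

def rowMinors (A : Matrix m n R) (g : n → m) : R := det (A.submatrix g id)

theorem sqrt_det_transpose_mul_self_eq_norm_rowMinors (A : Matrix m n ℝ) :
    √(det (Aᵀ * A)) = ‖WithLp.toLp 2 A.rowMinors‖ / √(Fintype.card n).factorial := by
  have hfac : (0 : ℝ) < (Fintype.card n).factorial := by positivity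
  rw [EuclideanSpace.norm_eq, eq_div_iff (by positivity), ← Real.sqrt_mul' _ hfac.le]
  simp only [Real.norm_eq_abs, sq_abs, rowMinors, sum_det_submatrix_sq, mul_comm]

end Matrix

section Integral

variable {X Y n : Type*} [MeasurableSpace X] [MeasurableSpace Y] [Fintype n] [DecidableEq n]
  {μ : Measure X} {ν : Measure Y} [IsProbabilityMeasure μ] [IsProbabilityMeasure ν]

theorem integral_det_add_vecMulVec (N : Matrix n n ℝ) (x : n → ℝ) {α : X → n → ℝ}
    (hα : Integrable α μ) (hα₀ : ∫ a, α a ∂μ = 0) :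
    ∫ a, (N + vecMulVec x (α a)).det ∂μ = N.det := by
  let L : (n → ℝ) →L[ℝ] ℝ := LinearMap.toContinuousLinearMap
    (∑ i, x i • (detRowAlternating : (n → ℝ) [⋀^n]→ₗ[ℝ] ℝ).toMultilinearMap.toLinearMap N i)
  have hL : ∀ s, (N + vecMulVec x s).det = N.det + L s := fun s => by
    rw [det_add_vecMulVec]
    simp only [L, LinearMap.coe_toContinuousLinearMap', LinearMap.sum_apply, LinearMap.smul_apply,
      smul_eq_mul]
    rfl
  simp_rw [hL]
  rw [integral_add (integrable_const _) (L.integrable_comp hα), integral_const,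
    L.integral_comp_comm hα, hα₀, map_zero]
  simp

theorem integral_det_add_vecMulVec_add_vecMulVec (N : Matrix n n ℝ) (x y : n → ℝ)
    {α : X → n → ℝ} {β : Y → n → ℝ} (hα : Integrable α μ) (hα₀ : ∫ a, α a ∂μ = 0)
    (hβ : Integrable β ν) (hβ₀ : ∫ b, β b ∂ν = 0)
    (hint : Integrable (fun p : X × Y => (N + vecMulVec x (α p.1) + vecMulVec y (β p.2)).det)
      (μ.prod ν)) :
    ∫ p, (N + vecMulVec x (α p.1) + vecMulVec y (β p.2)).det ∂(μ.prod ν) = N.det := by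
  rw [integral_prod _ hint]
  simp_rw [integral_det_add_vecMulVec _ y hβ hβ₀]
  exact integral_det_add_vecMulVec N x hα hα₀

end Integral

theorem Continuous.integrable_of_ae_mem_isCompact {X E : Type*} [TopologicalSpace X]
    [T2Space X] [MeasurableSpace X] [OpensMeasurableSpace X] [NormedAddCommGroup E] {μ : Measure X}
    [IsFiniteMeasure μ] {K : Set X} (hK : IsCompact K) (hμK : ∀ᵐ x ∂μ, x ∈ K) {f : X → E}
    (hf : Continuous f) : Integrable f μ := by
  rw [← Measure.restrict_eq_self_of_ae_mem hμK]
  exact hf.continuousOn.integrableOn_compact hK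

section Uniform

variable {r : ℝ}

theorem isProbabilityMeasure_unifIcc (hr : 0 ≤ r) : IsProbabilityMeasure (unifIcc r) := by
  unfold unifIcc
  split_ifs with h
  · infer_instance
  · have h2r : (2 * r).toNNReal ≠ 0 := by
      simpa [Real.toNNReal_eq_zero] using lt_of_le_of_ne hr (Ne.symm h)
    constructor
    rw [Measure.smul_apply, Measure.restrict_apply_univ, Real.volume_Icc, sub_neg_eq_add,
      ← two_mul, ENNReal.ofReal, ← ENNReal.coe_smul, smul_eq_mul, inv_mul_cancel₀ h2r,
      ENNReal.coe_one]

theorem ae_mem_Icc_unifIcc : ∀ᵐ x ∂unifIcc r, x ∈ Set.Icc (-r) r := by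
  unfold unifIcc
  split_ifs with h
  · simp [h]
  · exact Measure.ae_smul_measure (ae_restrict_mem measurableSet_Icc) _

variable {ι : Type*} [Fintype ι]

theorem ae_mem_pi_unifIcc :
    ∀ᵐ a ∂Measure.pi (fun _ : ι => unifIcc r), a ∈ Set.univ.pi fun _ => Set.Icc (-r) r := by
  filter_upwards [Measure.ae_pi_le_pi (Filter.eventually_pi fun _ => ae_mem_Icc_unifIcc)]
    with a ha using Set.mem_univ_pi.2 ha

theorem Continuous.integrable_pi_unifIcc (hr : 0 ≤ r) {E : Type*} [NormedAddCommGroup E]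
    {f : (ι → ℝ) → E} (hf : Continuous f) :
    Integrable f (Measure.pi fun _ : ι => unifIcc r) :=
  have := isProbabilityMeasure_unifIcc hr
  hf.integrable_of_ae_mem_isCompact (isCompact_univ_pi fun _ => isCompact_Icc) ae_mem_pi_unifIcc

end Uniform

section Gass

variable {d B : ℕ} (e : Fin B → EuclideanSpace ℝ (Fin d)) (t u : EuclideanSpace ℝ (Fin d))
  {r₁ r₂ : ℝ}

theorem isProbabilityMeasure_gassMeasure (hr₁ : 0 ≤ r₁) (hr₂ : 0 ≤ r₂) :
    IsProbabilityMeasure (gassMeasure B r₁ r₂) :=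
  have := isProbabilityMeasure_unifIcc hr₁
  have := isProbabilityMeasure_unifIcc hr₂
  inferInstanceAs (IsProbabilityMeasure (Measure.prod _ _))

theorem Continuous.integrable_gassMeasure (hr₁ : 0 ≤ r₁) (hr₂ : 0 ≤ r₂) {E : Type*}
    [NormedAddCommGroup E] {f : (Fin B → ℝ) × (Fin B → ℝ) → E} (hf : Continuous f) :
    Integrable f (gassMeasure B r₁ r₂) := by
  have := isProbabilityMeasure_gassMeasure (B := B) hr₁ hr₂
  have hbox : ∀ᵐ δ ∂gassMeasure B r₁ r₂, δ ∈ (Set.univ.pi fun _ => Set.Icc (-r₁) r₁) ×ˢ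
      (Set.univ.pi fun _ => Set.Icc (-r₂) r₂) := by
    filter_upwards [Measure.quasiMeasurePreserving_fst.ae ae_mem_pi_unifIcc,
      Measure.quasiMeasurePreserving_snd.ae ae_mem_pi_unifIcc] with δ h₁ h₂ using ⟨h₁, h₂⟩
  exact hf.integrable_of_ae_mem_isCompact
    ((isCompact_univ_pi fun _ => isCompact_Icc).prod (isCompact_univ_pi fun _ => isCompact_Icc))
    hbox

def subFirst (a : Fin B → ℝ) (j : Fin (B - 1)) : ℝ :=
  a ⟨j.1 + 1, by have := j.2; omega⟩ - a ⟨0, by have := j.2; omega⟩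

@[fun_prop]
theorem continuous_subFirst : Continuous (subFirst (B := B)) := by
  unfold subFirst; fun_prop

theorem integral_subFirst_pi_unifIcc {r : ℝ} (hr : 0 ≤ r) :
    ∫ a, subFirst a ∂Measure.pi (fun _ : Fin B => unifIcc r) = 0 := by
  have := isProbabilityMeasure_unifIcc hr
  ext j
  rw [eval_integral fun j => Continuous.integrable_pi_unifIcc hr (by fun_prop)]
  simp only [subFirst]
  -- `a (j + 1)` and `a 0` have the same law
  rw [integral_sub ((continuous_apply _).integrable_pi_unifIcc hr)
    ((continuous_apply _).integrable_pi_unifIcc hr), integral_eval, integral_eval, sub_self,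
    Pi.zero_apply]

noncomputable def gassEdgeMatrix (δ : (Fin B → ℝ) × (Fin B → ℝ)) :
    Matrix (Fin d) (Fin (B - 1)) ℝ :=
  Matrix.of fun x j => gassEdge e t u δ j x

theorem gassGram_eq (δ : (Fin B → ℝ) × (Fin B → ℝ)) :
    gassGram e t u δ = (gassEdgeMatrix e t u δ)ᵀ * gassEdgeMatrix e t u δ := by
  ext i j
  simp [gassGram, gassEdgeMatrix, mul_apply, PiLp.inner_apply, mul_comm]

theorem gassEdgeMatrix_eq (δ : (Fin B → ℝ) × (Fin B → ℝ)) :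
    gassEdgeMatrix e t u δ =
      gassEdgeMatrix e t u 0 + vecMulVec t (subFirst δ.1) + vecMulVec u (subFirst δ.2) := by
  ext x j
  simp only [gassEdgeMatrix, gassEdge, gassPert, subFirst, of_apply, Matrix.add_apply,
    vecMulVec_apply, PiLp.sub_apply, PiLp.add_apply, PiLp.smul_apply, smul_eq_mul, Prod.fst_zero,
    Prod.snd_zero, Pi.zero_apply, zero_smul, add_zero]
  ring

theorem continuous_gassEdgeMatrix : Continuous (gassEdgeMatrix e t u) := by
  rw [funext (gassEdgeMatrix_eq e t u)]
  fun_prop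

theorem gassVolume_eq_norm_rowMinors (δ : (Fin B → ℝ) × (Fin B → ℝ)) :
    gassVolume e t u δ = ‖WithLp.toLp 2 (gassEdgeMatrix e t u δ).rowMinors‖ /
      (√(B - 1).factorial * (B - 1).factorial) := by
  rw [gassVolume, gassGram_eq, sqrt_det_transpose_mul_self_eq_norm_rowMinors, Fintype.card_fin,
    div_div]

theorem integral_rowMinors_gassEdgeMatrix (hr₁ : 0 ≤ r₁) (hr₂ : 0 ≤ r₂)
    (g : Fin (B - 1) → Fin d) :
    ∫ δ, (gassEdgeMatrix e t u δ).rowMinors g ∂gassMeasure B r₁ r₂ =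
      (gassEdgeMatrix e t u 0).rowMinors g := by
  have := isProbabilityMeasure_unifIcc hr₁
  have := isProbabilityMeasure_unifIcc hr₂
  have hminor : ∀ δ, (gassEdgeMatrix e t u δ).rowMinors g =
      ((gassEdgeMatrix e t u 0).submatrix g id + vecMulVec (t ∘ g) (subFirst δ.1) +
        vecMulVec (u ∘ g) (subFirst δ.2)).det := fun δ => by
    rw [rowMinors, gassEdgeMatrix_eq e t u δ]; rfl
  refine (integral_congr_ae (ae_of_all _ hminor)).trans ?_
  exact integral_det_add_vecMulVec_add_vecMulVec _ _ _
    (continuous_subFirst.integrable_pi_unifIcc hr₁) (integral_subFirst_pi_unifIcc hr₁)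
    (continuous_subFirst.integrable_pi_unifIcc hr₂) (integral_subFirst_pi_unifIcc hr₂)
    (Continuous.integrable_gassMeasure hr₁ hr₂ (by fun_prop))

end Gass

theorem gass_expected_volume_ge_general {d B : ℕ}
    (e : Fin B → EuclideanSpace ℝ (Fin d))
    (t u : EuclideanSpace ℝ (Fin d))
    {r₁ r₂ : ℝ} (hr₁ : 0 ≤ r₁) (hr₂ : 0 ≤ r₂) :
    ∫ δ, gassVolume e t u δ ∂(gassMeasure B r₁ r₂) ≥ gassVolume e t u 0 := by
  have := isProbabilityMeasure_gassMeasure (B := B) hr₁ hr₂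
  set T := fun δ => WithLp.toLp 2 (gassEdgeMatrix e t u δ).rowMinors
  have hT : ∫ δ, T δ ∂gassMeasure B r₁ r₂ = T 0 := by
    ext g
    rw [eval_integral_piLp fun g => Continuous.integrable_gassMeasure hr₁ hr₂
      ((continuous_gassEdgeMatrix e t u).matrix_submatrix g id).matrix_det]
    exact integral_rowMinors_gassEdgeMatrix e t u hr₁ hr₂ g
  set c : ℝ := √(B - 1).factorial * (B - 1).factorial
  rw [ge_iff_le]
  calc gassVolume e t u 0 = ‖∫ δ, T δ ∂gassMeasure B r₁ r₂‖ / c := by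
        rw [hT]; exact gassVolume_eq_norm_rowMinors e t u 0
    _ ≤ (∫ δ, ‖T δ‖ ∂gassMeasure B r₁ r₂) / c := by
        gcongr
        exact norm_integral_le_integral_norm _
    _ = ∫ δ, gassVolume e t u δ ∂gassMeasure B r₁ r₂ := by
        rw [← integral_div]
        simp_rw [gassVolume_eq_norm_rowMinors, T, c]

/-- **Expected geometric hypervolume guarantee** (Proposition 4.1, weak form). For `B ≥ 2`
points `e₁, …, e_B` on the unit sphere of `ℝᵈ`, perturbed along two orthonormal directions
`t, u` by independent uniform shifts on `[-r₁, r₁]` and `[-r₂, r₂]`, the expected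
hypervolume of the perturbed point set is at least the hypervolume of the original set:
`E[V(δ)] ≥ V(0)`. -/
theorem gass_expected_volume_ge {d B : ℕ} (hB : 2 ≤ B)
    (e : Fin B → EuclideanSpace ℝ (Fin d)) (he : ∀ i, ‖e i‖ = 1)
    (t u : EuclideanSpace ℝ (Fin d))
    (ht : ‖t‖ = 1) (hu : ‖u‖ = 1) (htu : inner ℝ t u = (0 : ℝ))
    {r₁ r₂ : ℝ} (hr₁ : 0 ≤ r₁) (hr₂ : 0 ≤ r₂) :
    ∫ δ, gassVolume e t u δ ∂(gassMeasure B r₁ r₂) ≥ gassVolume e t u 0 :=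
  gass_expected_volume_ge_general e t u hr₁ hr₂
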